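/- Let X be a real Banach space, let x₀ ∈ S_X be a Daugavet point and let y ∈ S_X be a denting point of B_X. Then ‖x₀ − y‖ = 2. -/

import Mathlib

variable {X : Type*} [NormedAddCommGroup X] [NormedSpace ℝ X] [CompleteSpace X]

/-- The slice `S(f, α)` of the closed unit ball of `X`. -/
def ballSlice (f : X →L[ℝ] ℝ) (α : ℝ) : Set X := {y | ‖y‖ ≤ 1 ∧ f y > 1 - α}

/-- `x` is a Daugavet point: for every slice of the unit ball and every `ε > 0`
there is a point of the slice at distance `> 2 - ε` from `x`. -/
def IsDaugavetPoint (x : X) : Prop :=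
  ∀ (f : X →L[ℝ] ℝ), ‖f‖ = 1 → ∀ α : ℝ, 0 < α →
    ∀ ε : ℝ, 0 < ε → ∃ y ∈ ballSlice f α, ‖x - y‖ > 2 - ε

/-- `y` is a denting point of the unit ball: there are slices containing `y` of
arbitrarily small diameter. -/
def IsDentingPoint (y : X) : Prop :=
  ∀ ε : ℝ, 0 < ε → ∃ (f : X →L[ℝ] ℝ) (α : ℝ), ‖f‖ = 1 ∧ 0 < α ∧
    y ∈ ballSlice f α ∧ Metric.diam (ballSlice f α) < ε

omit [CompleteSpace X] in
theorem ballSlice_subset_closedBall (f : X →L[ℝ] ℝ) (α : ℝ) :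
    ballSlice f α ⊆ Metric.closedBall (0 : X) 1 := fun _ hy ↦
  mem_closedBall_zero_iff.mpr hy.1

omit [CompleteSpace X] in
theorem isBounded_ballSlice (f : X →L[ℝ] ℝ) (α : ℝ) : Bornology.IsBounded (ballSlice f α) :=
  Metric.isBounded_closedBall.subset (ballSlice_subset_closedBall f α)

omit [CompleteSpace X] in
theorem IsDaugavetPoint.two_sub_diam_le_norm_sub {x y : X} (hx : IsDaugavetPoint x)
    {f : X →L[ℝ] ℝ} (hf : ‖f‖ = 1) {α : ℝ} (hα : 0 < α) (hy : y ∈ ballSlice f α) :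
    2 - Metric.diam (ballSlice f α) ≤ ‖x - y‖ := by
  refine le_of_forall_pos_lt_add fun ε hε ↦ ?_
  obtain ⟨z, hz, hxz⟩ := hx f hf α hα ε hε
  have hzy : ‖z - y‖ ≤ Metric.diam (ballSlice f α) := by
    rw [← dist_eq_norm]
    exact Metric.dist_le_diam_of_mem (isBounded_ballSlice f α) hz hy
  calc 2 - Metric.diam (ballSlice f α) < ‖x - z‖ + ε - ‖z - y‖ := by linarith
    _ ≤ ‖x - y‖ + ε := by linarith [norm_sub_le_norm_sub_add_norm_sub x y z, norm_sub_rev y z]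

theorem daugavet_point_dist_denting_point (x₀ : X) (hx₀ : ‖x₀‖ = 1)
    (hD : IsDaugavetPoint x₀) (y : X) (hy : ‖y‖ = 1) (hdent : IsDentingPoint y) :
    ‖x₀ - y‖ = 2 := by
  have hle : ‖x₀ - y‖ ≤ 2 := by
    calc ‖x₀ - y‖ ≤ ‖x₀‖ + ‖y‖ := norm_sub_le x₀ y
      _ = 2 := by rw [hx₀, hy]; norm_num
  refine le_antisymm hle (le_of_forall_sub_le fun ε hε ↦ ?_)
  obtain ⟨f, α, hf, hα, hyS, hdiam⟩ := hdent ε hε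
  linarith [hD.two_sub_diam_le_norm_sub hf hα hyS]
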